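/- arXiv:2509.10421 — 2 statements merged into one kernel-verified Lean document; each statement's English description precedes it below -/
import Mathlib

section
/- The ME Weibull joint reliability function is 2-increasing (a valid bivariate survival function): for all 0 ≤ t₁ ≤ t₂ and 0 ≤ u₁ ≤ u₂, R(t₁, u₁) − R(t₂, u₁) − R(t₁, u₂) + R(t₂, u₂) ≥ 0, whenever 0 < θ ≤ 1. -/
/-!
Writing `x = (t/η_T)^{λ_T/θ}` and `y = (u/η_U)^{λ_U/θ}`, both nondecreasing and nonnegative,
`R(t,u) = φ(x + y)` with `φ(s) = exp(-s^θ)`. For `θ ≤ 1` the map `s ↦ s^θ` is concave on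
`[0, ∞)`, so `φ` is convex there, and a convex function of a sum is supermodular:
`φ(x₂ + y₁) + φ(x₁ + y₂) ≤ φ(x₁ + y₁) + φ(x₂ + y₂)`, since the two middle points lie between
the outer two and have the same sum.
-/

/-- The joint reliability function of the multivariate extension (ME) Weibull model:
`R(t,u) = exp{−[(t/η_T)^{λ_T/θ} + (u/η_U)^{λ_U/θ}]^θ}`, where real exponents are
interpreted via `Real.rpow`. -/
noncomputable def MEReliability (etaT lamT etaU lamU θ t u : ℝ) : ℝ :=
  Real.exp (-(((t / etaT) ^ (lamT / θ) + (u / etaU) ^ (lamU / θ)) ^ θ))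

open Real Set

theorem ConvexOn.exp {s : Set ℝ} {f : ℝ → ℝ} (hf : ConvexOn ℝ s f) :
    ConvexOn ℝ s (fun x => Real.exp (f x)) :=
  ⟨hf.1, fun _ hx _ hy _ _ ha hb hab =>
    (exp_le_exp.2 (hf.2 hx hy ha hb hab)).trans
      (convexOn_exp.2 (mem_univ _) (mem_univ _) ha hb hab)⟩

theorem ConvexOn.add_le_add_of_add_eq {𝕜 : Type*} [Field 𝕜] [LinearOrder 𝕜]
    [IsStrictOrderedRing 𝕜] {s : Set 𝕜} {f : 𝕜 → 𝕜} (hf : ConvexOn 𝕜 s f) {a b c d : 𝕜}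
    (ha : a ∈ s) (hd : d ∈ s) (hab : a ≤ b) (hac : a ≤ c) (hsum : b + c = a + d) :
    f b + f c ≤ f a + f d := by
  rcases hab.eq_or_lt with rfl | hab
  · obtain rfl : c = d := by linarith
    rfl
  rcases hac.eq_or_lt with rfl | hac
  · obtain rfl : b = d := by linarith
    exact (add_comm _ _).le
  have hbd : b < d := by linarith
  have hcd : c < d := by linarith
  have hb := hf.secant_mono_aux1 ha hd hab hbd
  have hc := hf.secant_mono_aux1 ha hd hac hcd
  refine le_of_mul_le_mul_left ?_ (sub_pos.2 (hab.trans hbd))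
  linear_combination hb + hc + (f d - f a) * hsum

/-- The ME Weibull joint reliability function is 2-increasing (a valid bivariate
survival function): for all `0 ≤ t₁ ≤ t₂` and `0 ≤ u₁ ≤ u₂`,
`R(t₁,u₁) − R(t₂,u₁) − R(t₁,u₂) + R(t₂,u₂) ≥ 0`, whenever `0 < θ ≤ 1`. -/
theorem MEReliability_two_increasing (etaT lamT etaU lamU θ : ℝ)
    (hetaT : 0 < etaT) (hlamT : 0 < lamT) (hetaU : 0 < etaU) (hlamU : 0 < lamU)
    (hθ0 : 0 < θ) (hθ1 : θ ≤ 1)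
    (t₁ t₂ u₁ u₂ : ℝ) (ht₁ : 0 ≤ t₁) (ht : t₁ ≤ t₂) (hu₁ : 0 ≤ u₁) (hu : u₁ ≤ u₂) :
    0 ≤ MEReliability etaT lamT etaU lamU θ t₁ u₁
        - MEReliability etaT lamT etaU lamU θ t₂ u₁
        - MEReliability etaT lamT etaU lamU θ t₁ u₂
        + MEReliability etaT lamT etaU lamU θ t₂ u₂ := by
  have hφ : ConvexOn ℝ (Ici 0) (fun s : ℝ => Real.exp (-(s ^ θ))) :=
    (concaveOn_rpow hθ0.le hθ1).neg.exp
  set x₁ := (t₁ / etaT) ^ (lamT / θ)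
  set x₂ := (t₂ / etaT) ^ (lamT / θ)
  set y₁ := (u₁ / etaU) ^ (lamU / θ)
  set y₂ := (u₂ / etaU) ^ (lamU / θ)
  have hx₁ : 0 ≤ x₁ := by positivity
  have hy₁ : 0 ≤ y₁ := by positivity
  have hx : x₁ ≤ x₂ := rpow_le_rpow (div_nonneg ht₁ hetaT.le) (by gcongr) (by positivity)
  have hy : y₁ ≤ y₂ := rpow_le_rpow (div_nonneg hu₁ hetaU.le) (by gcongr) (by positivity)
  have hsupermodular := hφ.add_le_add_of_add_eq (b := x₂ + y₁) (c := x₁ + y₂)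
    (mem_Ici.2 (add_nonneg hx₁ hy₁)) (mem_Ici.2 (by linarith : 0 ≤ x₂ + y₂))
    (by linarith) (by linarith) (by ring)
  unfold MEReliability
  linarith
end

section
/- For all t, u > 0, the mixed second partial derivative ∂²R(t,u)/∂t∂u of the ME Weibull joint reliability function equals the joint density f(t,u) = (λ_T λ_U / (η_T^{λ_T/θ} η_U^{λ_U/θ} θ)) · t^{λ_T/θ − 1} u^{λ_U/θ − 1} [ (t/η_T)^{λ_T/θ} + (u/η_U)^{λ_U/θ} ]^{θ−2} { θ [ (t/η_T)^{λ_T/θ} + (u/η_U)^{λ_U/θ} ]^{θ} − (θ−1) } · exp{−[ (t/η_T)^{λ_T/θ} + (u/η_U)^{λ_U/θ} ]^{θ}}. -/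
open Real Filter Topology

theorem deriv_deriv_comp_add {F F' A B : ℝ → ℝ} {a' b' F'' t u : ℝ}
    (hA : HasDerivAt A a' t) (hB : HasDerivAt B b' u)
    (hF : ∀ᶠ s in 𝓝 t, HasDerivAt F (F' (A s + B u)) (A s + B u))
    (hF' : HasDerivAt F' F'' (A t + B u)) :
    deriv (fun s => deriv (fun v => F (A s + B v)) u) t = F'' * a' * b' := by
  have inner : (fun s => deriv (fun v => F (A s + B v)) u) =ᶠ[𝓝 t] fun s => F' (A s + B u) * b' :=
    hF.mono fun s hFs => (hFs.comp u (hB.const_add (A s))).deriv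
  rw [inner.deriv_eq]
  exact ((hF'.comp t (hA.add_const (B u))).mul_const b').deriv

theorem hasDerivAt_div_const_rpow {c p x : ℝ} (hc : 0 < c) (hx : 0 < x) :
    HasDerivAt (fun y => (y / c) ^ p) (p * x ^ (p - 1) / c ^ p) x := by
  convert ((hasDerivAt_id' x).div_const c).rpow_const (p := p) (Or.inl (div_pos hx hc).ne') using 1
  rw [div_rpow hx.le hc.le, rpow_sub_one hc.ne']
  field_simp

theorem hasDerivAt_exp_neg_rpow {θ x : ℝ} (hx : 0 < x) :
    HasDerivAt (fun y => exp (-y ^ θ)) (-θ * x ^ (θ - 1) * exp (-x ^ θ)) x :=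
  ((hasDerivAt_id' x).rpow_const (p := θ) (Or.inl hx.ne')).neg.exp.congr_deriv
    (by simp only [Pi.neg_apply]; ring)

theorem hasDerivAt_neg_mul_rpow_sub_one_mul_exp_neg_rpow {θ x : ℝ} (hx : 0 < x) :
    HasDerivAt (fun y => -θ * y ^ (θ - 1) * exp (-y ^ θ))
      (θ * x ^ (θ - 2) * (θ * x ^ θ - (θ - 1)) * exp (-x ^ θ)) x := by
  have hpow := ((hasDerivAt_id' x).rpow_const (p := θ - 1) (Or.inl hx.ne')).const_mul (-θ)
  refine (hpow.mul (hasDerivAt_exp_neg_rpow (θ := θ) hx)).congr_deriv ?_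
  have hsq : x ^ (θ - 1) * x ^ (θ - 1) = x ^ (θ - 2) * x ^ θ := by
    rw [← rpow_add hx, ← rpow_add hx]
    ring_nf
  have hsub : x ^ (θ - 1 - 1) = x ^ (θ - 2) := by ring_nf
  rw [hsub]
  linear_combination θ ^ 2 * exp (-x ^ θ) * hsq

theorem MEReliability_mixed_partial_eq_density_general (etaT lamT etaU lamU θ : ℝ)
    (hetaT : 0 < etaT) (hetaU : 0 < etaU)
    (hθ0 : 0 < θ) (t u : ℝ) (ht : 0 < t) (hu : 0 < u) :
    deriv (fun s => deriv (fun v => MEReliability etaT lamT etaU lamU θ s v) u) t =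
      (lamT * lamU / (etaT ^ (lamT / θ) * etaU ^ (lamU / θ) * θ))
        * t ^ (lamT / θ - 1) * u ^ (lamU / θ - 1)
        * ((t / etaT) ^ (lamT / θ) + (u / etaU) ^ (lamU / θ)) ^ (θ - 2)
        * (θ * ((t / etaT) ^ (lamT / θ) + (u / etaU) ^ (lamU / θ)) ^ θ - (θ - 1))
        * Real.exp (-(((t / etaT) ^ (lamT / θ) + (u / etaU) ^ (lamU / θ)) ^ θ)) := by
  have hS : ∀ s, 0 < s → 0 < (s / etaT) ^ (lamT / θ) + (u / etaU) ^ (lamU / θ) := fun s hs =>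
    add_pos (rpow_pos_of_pos (div_pos hs hetaT) _) (rpow_pos_of_pos (div_pos hu hetaU) _)
  refine (deriv_deriv_comp_add (hasDerivAt_div_const_rpow hetaT ht)
    (hasDerivAt_div_const_rpow hetaU hu)
    (eventually_of_mem (Ioi_mem_nhds ht) fun s hs => hasDerivAt_exp_neg_rpow (hS s hs))
    (hasDerivAt_neg_mul_rpow_sub_one_mul_exp_neg_rpow (hS t ht))).trans ?_
  field_simp

/-- For all `t, u > 0`, the mixed second partial derivative `∂²R(t,u)/∂t∂u` of the ME
Weibull joint reliability function equals the joint density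
`f(t,u) = (λ_T λ_U / (η_T^{λ_T/θ} η_U^{λ_U/θ} θ)) · t^{λ_T/θ−1} u^{λ_U/θ−1}
· S^{θ−2} · (θ S^θ − (θ−1)) · exp(−S^θ)` where
`S = (t/η_T)^{λ_T/θ} + (u/η_U)^{λ_U/θ}`. -/
theorem MEReliability_mixed_partial_eq_density (etaT lamT etaU lamU θ : ℝ)
    (hetaT : 0 < etaT) (hlamT : 0 < lamT) (hetaU : 0 < etaU) (hlamU : 0 < lamU)
    (hθ0 : 0 < θ) (hθ1 : θ ≤ 1) (t u : ℝ) (ht : 0 < t) (hu : 0 < u) :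
    deriv (fun s => deriv (fun v => MEReliability etaT lamT etaU lamU θ s v) u) t =
      (lamT * lamU / (etaT ^ (lamT / θ) * etaU ^ (lamU / θ) * θ))
        * t ^ (lamT / θ - 1) * u ^ (lamU / θ - 1)
        * ((t / etaT) ^ (lamT / θ) + (u / etaU) ^ (lamU / θ)) ^ (θ - 2)
        * (θ * ((t / etaT) ^ (lamT / θ) + (u / etaU) ^ (lamU / θ)) ^ θ - (θ - 1))
        * Real.exp (-(((t / etaT) ^ (lamT / θ) + (u / etaU) ^ (lamU / θ)) ^ θ)) :=
  MEReliability_mixed_partial_eq_density_general etaT lamT etaU lamU θ hetaT hetaU hθ0 t u ht hu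
end
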